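/- Let the Evans mDAG on nodes {a,b,c} have directed edges a→b and a→c and simplicial complex generated by the facets {a,b} and {a,c}; let Instrumental BAC be the mDAG with directed edges b→a and a→c and simplicial complex generated by the facet {a,c}; and let Instrumental CAB be the mDAG with directed edges c→a and a→b and simplicial complex generated by the facet {a,b}. Take all three visible variables binary and let S = {(0,0,0), (0,1,1), (1,0,0)} be a set of joint outcomes of (X_a, X_b, X_c). Then: (i) some distribution realizable by the Evans mDAG at binary cardinalities has support exactly S; and (ii) no distribution with support S is realizable by Instrumental BAC, and no distribution with support S is realizable by Instrumental CAB. Consequently, neither Instrumental BAC nor Instrumental CAB observationally dominates the Evans mDAG. -/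

import Mathlib

open scoped Classical

/-! ## Basic structures: pDAGs and mDAGs -/

/-- A partitioned directed acyclic graph (pDAG) with visible node type `V` and
latent node type `L`.  Acyclicity is phrased via the existence of a topological
rank function, which for finite graphs is equivalent to the absence of directed
cycles. -/
structure pDAG (V L : Type) where
  edge : V ⊕ L → V ⊕ L → Prop
  acyclic : ∃ rank : V ⊕ L → ℕ, ∀ a b, edge a b → rank a < rank b

/-- `P` is a probability distribution on a finite type. -/
def IsDist {α : Type} [Fintype α] (P : α → ℝ) : Prop :=
  (∀ x, 0 ≤ P x) ∧ ∑ x, P x = 1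

/-- The joint assignment of outcomes to all (visible and latent) nodes obtained
from an assignment `xv` to the visible nodes and `xl` to the latent nodes. -/
def jointVal {V L : Type} (c : V → ℕ) (k : L → ℕ)
    (xv : (v : V) → Fin (c v)) (xl : (l : L) → Fin (k l)) :
    (a : V ⊕ L) → Fin (Sum.elim c k a)
  | Sum.inl v => xv v
  | Sum.inr l => xl l

/-- A probability distribution `P` over the visible variables (with cardinalities `c`)
is realizable by the pDAG `G` (with classical unrestricted semantics, arbitrary finite
cardinalities of the latent variables) if there are latent cardinalities `k`, error
cardinalities `e`, error distributions `PE` and functions `f` (each depending only on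
the values of the parents and the local error variable) whose induced marginal on the
visible variables is `P`. -/
def pDAG.Realizable {V L : Type} [Fintype V] [Fintype L] [DecidableEq V] [DecidableEq L]
    (G : pDAG V L) (c : V → ℕ) (P : ((v : V) → Fin (c v)) → ℝ) : Prop :=
  IsDist P ∧
  ∃ (k : L → ℕ) (e : V ⊕ L → ℕ)
    (PE : (a : V ⊕ L) → Fin (e a) → ℝ)
    (f : (a : V ⊕ L) → ((b : V ⊕ L) → Fin (Sum.elim c k b)) → Fin (e a) →
      Fin (Sum.elim c k a)),
    (∀ a, IsDist (PE a)) ∧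
    (∀ a g g' ε, (∀ b, G.edge b a → g b = g' b) → f a g ε = f a g' ε) ∧
    ∀ xv : (v : V) → Fin (c v),
      P xv = ∑ xl : (l : L) → Fin (k l), ∑ ε : (a : V ⊕ L) → Fin (e a),
        ∏ a : V ⊕ L,
          (if jointVal c k xv xl a = f a (jointVal c k xv xl) (ε a) then (1:ℝ) else 0)
            * PE a (ε a)

/-- `G` observationally dominates `G'`: for every assignment of finite cardinalities to
the visible variables, every distribution realizable by `G'` is realizable by `G`. -/
def pDAG.ObsDominates {V L L' : Type} [Fintype V] [Fintype L] [Fintype L']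
    [DecidableEq V] [DecidableEq L] [DecidableEq L']
    (G : pDAG V L) (G' : pDAG V L') : Prop :=
  ∀ (c : V → ℕ) (P : ((v : V) → Fin (c v)) → ℝ), G'.Realizable c P → G.Realizable c P

/-- An mDAG: a DAG on the node type `V` together with a simplicial complex on `V`
(a family of finite subsets containing all singletons and closed under subsets). -/
structure mDAG (V : Type) where
  edge : V → V → Prop
  acyclic : ∃ rank : V → ℕ, ∀ a b, edge a b → rank a < rank b
  faces : Finset (Finset V)
  singleton_mem : ∀ v : V, {v} ∈ faces
  down_closed : ∀ A B : Finset V, A ⊆ B → B ∈ faces → A ∈ faces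

namespace mDAG

variable {V : Type}

/-- A facet is an inclusion-maximal face of the simplicial complex. -/
def IsFacet (G : mDAG V) (A : Finset V) : Prop :=
  A ∈ G.faces ∧ ∀ B ∈ G.faces, A ⊆ B → A = B

/-- An mDAG is confounder-free if every facet of its simplicial complex is a singleton. -/
def ConfounderFree (G : mDAG V) : Prop :=
  ∀ A : Finset V, G.IsFacet A → ∃ v : V, A = {v}

/-- An mDAG is directed-edge-free if its directed structure has no edges. -/
def DirectedEdgeFree (G : mDAG V) : Prop :=
  ∀ a b : V, ¬ G.edge a b

/-- `G` structurally dominates `G'` if the directed edges of `G'` are a subset of those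
of `G` and the simplicial complex of `G'` is contained in that of `G`. -/
def StructDominates (G G' : mDAG V) : Prop :=
  (∀ a b : V, G'.edge a b → G.edge a b) ∧ G'.faces ⊆ G.faces

/-- The type of facets of an mDAG. -/
def Facets (G : mDAG V) : Type := {A : Finset V // G.IsFacet A}

noncomputable instance instFintypeFacets [Fintype V] [DecidableEq V] (G : mDAG V) :
    Fintype G.Facets := Subtype.fintype _

noncomputable instance instDecidableEqFacets (G : mDAG V) :
    DecidableEq G.Facets := Classical.decEq _

/-- The canonical pDAG of an mDAG: the visible nodes carry the directed structure, and
there is one exogenous latent node per facet, whose children are exactly the members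
of that facet. -/
def canon (G : mDAG V) : pDAG V G.Facets where
  edge a b :=
    match a, b with
    | Sum.inl u, Sum.inl v => G.edge u v
    | Sum.inr A, Sum.inl v => v ∈ A.1
    | _, Sum.inr _ => False
  acyclic := by
    obtain ⟨r, hr⟩ := G.acyclic
    refine ⟨Sum.elim (fun v => r v + 1) (fun _ => 0), ?_⟩
    rintro (u | A) (v | B) h
    · simpa using hr u v h
    · exact h.elim
    · simp
    · exact h.elim

/-- Realizability of a distribution over the visible variables by an mDAG (via its
canonical pDAG). -/
def Realizable [Fintype V] [DecidableEq V] (G : mDAG V) (c : V → ℕ)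
    (P : ((v : V) → Fin (c v)) → ℝ) : Prop :=
  G.canon.Realizable c P

/-- Observational dominance of mDAGs: for every assignment of finite cardinalities to
the visible nodes, every distribution realizable by `G'` is realizable by `G`. -/
def ObsDominates [Fintype V] [DecidableEq V] (G G' : mDAG V) : Prop :=
  ∀ (c : V → ℕ) (P : ((v : V) → Fin (c v)) → ℝ), G'.Realizable c P → G.Realizable c P

/-- Observational equivalence of mDAGs. -/
def ObsEquiv [Fintype V] [DecidableEq V] (G G' : mDAG V) : Prop :=
  ∀ (c : V → ℕ) (P : ((v : V) → Fin (c v)) → ℝ), G.Realizable c P ↔ G'.Realizable c P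

/-- Consistency with the fixed nodal ordering given by the order on `V`:
a later node is never an ancestor of an earlier node. -/
def OrderConsistent [LT V] (G : mDAG V) : Prop :=
  ∀ i j : V, i < j → ¬ Relation.TransGen G.edge j i

/-- `G'` is obtained from `G` by relabelling the nodes with the permutation `π`. -/
def IsRelabel (π : Equiv.Perm V) (G G' : mDAG V) : Prop :=
  (∀ a b : V, G'.edge (π a) (π b) ↔ G.edge a b) ∧
  G'.faces = G.faces.image (Finset.image π)

/-- Adjacency in the skeleton of an mDAG: a directed edge in either direction, or
joint membership in some face of the simplicial complex. -/
def skelAdj (G : mDAG V) (u w : V) : Prop :=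
  G.edge u w ∨ G.edge w u ∨ ∃ A ∈ G.faces, u ∈ A ∧ w ∈ A

end mDAG

/-! ## d-separation and e-separation -/

/-- Undirected adjacency underlying a directed graph. -/
def AdjRel {N : Type} (E : N → N → Prop) (a b : N) : Prop := E a b ∨ E b a

/-- The middle node `y` of a consecutive triple `(x, y, z)` of a path does not block the
path given the conditioning set `C`: if `y` is a collider it has a descendant in `C`
(possibly itself), and if it is a non-collider it is not in `C`. -/
def ActiveTriple {N : Type} (E : N → N → Prop) (C : Set N) (x y z : N) : Prop :=
  ((E x y ∧ E z y) ∧ ∃ d ∈ C, Relation.ReflTransGen E y d) ∨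
  (¬(E x y ∧ E z y) ∧ y ∉ C)

/-- Every consecutive triple of the path is active given the conditioning set `C`. -/
def TriplesActive {N : Type} (E : N → N → Prop) (C : Set N) : List N → Prop
  | x :: y :: z :: rest => ActiveTriple E C x y z ∧ TriplesActive E C (y :: z :: rest)
  | _ => True

/-- `A` and `B` are d-connected given `C`: there is a (repetition-free, undirected)
path from a node of `A` to a node of `B` that is not blocked by `C`. -/
def DConnected {N : Type} (E : N → N → Prop) (A B C : Set N) : Prop :=
  ∃ p : List N, p.Chain' (AdjRel E) ∧ p.Nodup ∧
    (∃ a ∈ A, p.head? = some a) ∧ (∃ b ∈ B, p.getLast? = some b) ∧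
    TriplesActive E C p

/-- d-separation: every undirected path from `A` to `B` is blocked by `C`. -/
def DSeparated {N : Type} (E : N → N → Prop) (A B C : Set N) : Prop :=
  ¬ DConnected E A B C

namespace mDAG

variable {V : Type}

/-- d-separation of sets of (visible) nodes of an mDAG, evaluated in its canonical pDAG. -/
def dsep (G : mDAG V) (A B C : Set V) : Prop :=
  DSeparated G.canon.edge (Sum.inl '' A) (Sum.inl '' B) (Sum.inl '' C)

end mDAG

/-- The edge relation of a pDAG after deletion of the visible nodes in `D`. -/
def delEdge {V L : Type} (E : V ⊕ L → V ⊕ L → Prop) (D : Set V) (a b : V ⊕ L) : Prop :=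
  E a b ∧ (∀ v, a = Sum.inl v → v ∉ D) ∧ (∀ v, b = Sum.inl v → v ∉ D)

namespace mDAG

variable {V : Type}

/-- e-separation: `A` and `B` are e-separated by `C` after deletion of `D` if they are
d-separated by `C` in the subgraph of the canonical pDAG obtained by deleting the nodes
in `D`. -/
def eSep (G : mDAG V) (A B C D : Set V) : Prop :=
  DSeparated (delEdge G.canon.edge D) (Sum.inl '' A) (Sum.inl '' B) (Sum.inl '' C)

end mDAG

/-! ## Conditional independence -/

/-- The probability that the variables in `S` take the values specified by `g`. -/
noncomputable def margProb {V : Type} [Fintype V] [DecidableEq V] (c : V → ℕ)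
    (P : ((v : V) → Fin (c v)) → ℝ) (S : Set V) (g : (v : V) → Fin (c v)) : ℝ :=
  ∑ x : (v : V) → Fin (c v), if ∀ v ∈ S, x v = g v then P x else 0

/-- `X_A ⊥⊥ X_B | X_C` in the distribution `P`:
`P(X_A X_B | X_C) = P(X_A | X_C) P(X_B | X_C)` whenever the conditioning event has
positive probability. -/
def CondIndep {V : Type} [Fintype V] [DecidableEq V] (c : V → ℕ)
    (P : ((v : V) → Fin (c v)) → ℝ) (A B C : Set V) : Prop :=
  ∀ g : (v : V) → Fin (c v), 0 < margProb c P C g →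
    margProb c P (A ∪ B ∪ C) g * margProb c P C g
      = margProb c P (A ∪ C) g * margProb c P (B ∪ C) g

/-! ## Districts, closures and densely connected pairs -/

namespace mDAG

variable {V : Type}

/-- One step of connection through a common face, within the node subset `S`. -/
def faceStep (G : mDAG V) (S : Set V) (x y : V) : Prop :=
  x ∈ S ∧ y ∈ S ∧ ∃ F ∈ G.faces, x ∈ F ∧ y ∈ F

/-- The district of the set `A` in the sub-mDAG induced on `S`. -/
def disIn (G : mDAG V) (S A : Set V) : Set V :=
  {w | ∃ a ∈ A, Relation.ReflTransGen (G.faceStep S) a w}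

/-- The ancestors of the set `A` (including `A` itself) in the directed structure
restricted to `S`. -/
def anIn (G : mDAG V) (S A : Set V) : Set V :=
  {w | ∃ a ∈ A, Relation.ReflTransGen (fun x y => x ∈ S ∧ y ∈ S ∧ G.edge x y) w a}

/-- The alternating sequence of district and ancestor restrictions used to define
the closure of a set of nodes. -/
def closureSeq (G : mDAG V) (A : Set V) : ℕ → Set V
  | 0 => Set.univ
  | n + 1 =>
      if n % 2 = 0 then G.disIn (G.closureSeq A n) A else G.anIn (G.closureSeq A n) A

/-- The closure of a set of nodes: the limit (intersection) of the decreasing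
alternating sequence. -/
def closure (G : mDAG V) (A : Set V) : Set V := ⋂ n, G.closureSeq A n

/-- `S` is bidirected-connected: it forms a single district of the induced sub-mDAG
on `S`. -/
def BidirConnected (G : mDAG V) (S : Set V) : Prop :=
  ∀ u ∈ S, ∀ w ∈ S, Relation.ReflTransGen (G.faceStep S) u w

/-- Two distinct nodes `v`, `w` are densely connected. -/
def DenselyConnected (G : mDAG V) (v w : V) : Prop :=
  (∃ u ∈ G.closure {w}, G.edge v u) ∨
  (∃ u ∈ G.closure {v}, G.edge w u) ∨
  G.BidirConnected (G.closure {v, w})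

/-- `S` is a realizable support of the mDAG `G` at cardinalities `c`: some distribution
realizable by `G` at `c` has support exactly `S`. -/
def RealizableSupport [Fintype V] [DecidableEq V] (G : mDAG V) (c : V → ℕ)
    (S : Set ((v : V) → Fin (c v))) : Prop :=
  ∃ P : ((v : V) → Fin (c v)) → ℝ, G.Realizable c P ∧ ∀ x, x ∈ S ↔ 0 < P x

end mDAG
/-! ### Statement 19: the Evans mDAG versus the two instrumental mDAGs -/

/-- The Evans mDAG on nodes `{a, b, c} = {0, 1, 2}`: directed edges `a → b` and
`a → c`, and simplicial complex generated by the facets `{a, b}` and `{a, c}`. -/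
def evansMDAG : mDAG (Fin 3) where
  edge a b := (a = 0 ∧ b = 1) ∨ (a = 0 ∧ b = 2)
  acyclic := ⟨Fin.val, by decide⟩
  faces := {∅, {0}, {1}, {2}, {0, 1}, {0, 2}}
  singleton_mem := by decide
  down_closed := by decide

/-- The Instrumental BAC mDAG: directed edges `b → a` and `a → c`, and simplicial
complex generated by the facet `{a, c}`. -/
def instBAC : mDAG (Fin 3) where
  edge x y := (x = 1 ∧ y = 0) ∨ (x = 0 ∧ y = 2)
  acyclic := ⟨![1, 0, 2], by decide⟩
  faces := {∅, {0}, {1}, {2}, {0, 2}}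
  singleton_mem := by decide
  down_closed := by decide

/-- The Instrumental CAB mDAG: directed edges `c → a` and `a → b`, and simplicial
complex generated by the facet `{a, b}`. -/
def instCAB : mDAG (Fin 3) where
  edge x y := (x = 2 ∧ y = 0) ∨ (x = 0 ∧ y = 1)
  acyclic := ⟨![1, 2, 0], by decide⟩
  faces := {∅, {0}, {1}, {2}, {0, 1}}
  singleton_mem := by decide
  down_closed := by decide

/-- The support `S = {(0,0,0), (0,1,1), (1,0,0)}` of joint outcomes of
`(X_a, X_b, X_c)`, all variables binary. -/
def evansSupport : Set ((v : Fin 3) → Fin 2) :=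
  {![0, 0, 0], ![0, 1, 1], ![1, 0, 0]}

/-!
The Evans mDAG realizes `S` with two uniform latent bits `p`, `q` on its facets `{a, b}` and
`{a, c}`: `a` flags `p ≠ q`, and when `a = 0` the nodes `b`, `c` copy their latent bit, giving
`(0, p, p)`; otherwise the outcome is `(1, 0, 0)`.

In Instrumental BAC (resp. CAB), `z = b` (resp. `c`) is an exogenous instrument for `a`, `a` is
the only visible parent of the third node `y`, and `z` shares no latent cause with `y`. Realize `(0, 0, 0)` and switch only the hidden causes of `z` to ones realizing `(0, 1, 1)`.
The resulting outcome is possible and has `z = 1`, so within `S` it must be `(0, 1, 1)`. Then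
`a = 0`, and `y` sees the same parent values and hidden causes as in `(0, 0, 0)`, so `y = 0`.
-/

open Finset

lemma prod_indicator_mul_pos_iff {ι : Type*} [Fintype ι] {C : ι → Prop} [DecidablePred C]
    {p : ι → ℝ} (hp : ∀ i, 0 ≤ p i) :
    0 < ∏ i, (if C i then (1 : ℝ) else 0) * p i ↔ ∀ i, C i ∧ 0 < p i := by
  refine ⟨fun h i => ?_, fun h => prod_pos fun i _ => by simp [(h i).1, (h i).2]⟩
  by_contra hi
  have hzero : (if C i then (1 : ℝ) else 0) * p i = 0 := by
    by_cases hC : C i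
    · simp [hC, le_antisymm (not_lt.1 fun hpos => hi ⟨hC, hpos⟩) (hp i)]
    · simp [hC]
  exact h.ne' (prod_eq_zero (mem_univ i) hzero)

def distMap {α β : Type} [Fintype α] [DecidableEq β] (μ : α → ℝ) (s : α → β) : β → ℝ :=
  fun b => ∑ a, if s a = b then μ a else 0

section distMap

variable {α β : Type} [Fintype α] [DecidableEq β] {μ : α → ℝ} {s : α → β}

lemma IsDist.distMap [Fintype β] (hμ : IsDist μ) : IsDist (distMap μ s) := by
  refine ⟨fun b => sum_nonneg fun a _ => by split_ifs <;> simp [hμ.1 a], ?_⟩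
  simp only [_root_.distMap]
  rw [sum_comm]
  simpa [sum_ite_eq] using hμ.2

lemma distMap_pos_iff (hμ : ∀ a, 0 ≤ μ a) (b : β) :
    0 < distMap μ s b ↔ ∃ a, 0 < μ a ∧ s a = b := by
  rw [distMap, sum_pos_iff_of_nonneg fun a _ => by split_ifs <;> simp [hμ a]]
  refine exists_congr fun a => ?_
  by_cases h : s a = b <;> simp [h]

end distMap

lemma IsDist.pi {L : Type} [Fintype L] [DecidableEq L] {k : L → ℕ} {Q : (l : L) → Fin (k l) → ℝ}
    (hQ : ∀ l, IsDist (Q l)) : IsDist fun x : (l : L) → Fin (k l) => ∏ l, Q l (x l) :=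
  ⟨fun x => prod_nonneg fun l _ => (hQ l).1 _, by rw [← Fintype.prod_sum]; simp [(hQ _).2]⟩

namespace pDAG

variable {V L : Type} {c : V → ℕ} {k : L → ℕ} {e : V ⊕ L → ℕ}

abbrev Mechanisms (c : V → ℕ) (k : L → ℕ) (e : V ⊕ L → ℕ) : Type :=
  (a : V ⊕ L) → ((b : V ⊕ L) → Fin (Sum.elim c k b)) → Fin (e a) → Fin (Sum.elim c k a)

def IsLocal (G : pDAG V L) (f : Mechanisms c k e) : Prop :=
  ∀ a g g' ε, (∀ b, G.edge b a → g b = g' b) → f a g ε = f a g' ε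

def Solves (f : Mechanisms c k e) (xv : (v : V) → Fin (c v)) (xl : (l : L) → Fin (k l))
    (ε : (a : V ⊕ L) → Fin (e a)) : Prop :=
  ∀ a, jointVal c k xv xl a = f a (jointVal c k xv xl) (ε a)

variable [Fintype V] [Fintype L] [DecidableEq V] [DecidableEq L]

theorem Realizable.exists_isLocal_pos_iff_solves {G : pDAG V L}
    {P : ((v : V) → Fin (c v)) → ℝ} (hP : G.Realizable c P) :
    ∃ (k : L → ℕ) (e : V ⊕ L → ℕ) (f : Mechanisms c k e), G.IsLocal f ∧
      ∀ xv, 0 < P xv ↔ ∃ xl ε, Solves f xv xl ε := by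
  obtain ⟨-, k, e, PE, f, hPE, hloc, hsum⟩ := hP
  -- restrict each error variable to its values of positive probability
  let enum (a : V ⊕ L) : {i // 0 < PE a i} ≃ Fin (Fintype.card {i // 0 < PE a i}) :=
    Fintype.equivFin _
  refine ⟨k, _, fun a g i => f a g ((enum a).symm i).1,
    fun a g g' i h => hloc a g g' _ h, fun xv => ?_⟩
  have hterm (xl) (ε : (a : V ⊕ L) → Fin (e a)) :
      0 ≤ ∏ a, (if jointVal c k xv xl a = f a (jointVal c k xv xl) (ε a) then (1 : ℝ) else 0)
        * PE a (ε a) :=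
    prod_nonneg fun a _ => mul_nonneg (by split_ifs <;> simp) ((hPE a).1 _)
  simp only [hsum xv, sum_pos_iff_of_nonneg fun _ _ => sum_nonneg fun _ _ => hterm _ _,
    sum_pos_iff_of_nonneg fun _ _ => hterm _ _, mem_univ, true_and,
    prod_indicator_mul_pos_iff fun a => (hPE a).1 _]
  refine exists_congr fun xl => ⟨fun ⟨ε, hε⟩ => ⟨fun a => enum a ⟨ε a, (hε a).2⟩, fun a => ?_⟩,
    fun ⟨ε, hε⟩ => ⟨fun a => ((enum a).symm (ε a)).1, fun a => ⟨hε a, ((enum a).symm _).2⟩⟩⟩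
  simpa using (hε a).1

theorem realizable_distMap (G : pDAG V L) {Q : (l : L) → Fin (k l) → ℝ} (hQ : ∀ l, IsDist (Q l))
    (F : (v : V) → ((b : V ⊕ L) → Fin (Sum.elim c k b)) → Fin (c v))
    (hF : ∀ v g g', (∀ b, G.edge b (.inl v) → g b = g' b) → F v g = F v g')
    (sol : ((l : L) → Fin (k l)) → (v : V) → Fin (c v))
    (hsol : ∀ xl xv, (∀ v, xv v = F v (jointVal c k xv xl)) ↔ sol xl = xv) :
    G.Realizable c (distMap (fun xl => ∏ l, Q l (xl l)) sol) := by
  let PE : (a : V ⊕ L) → Fin (Sum.elim (fun _ => 1) k a) → ℝ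
    | .inl _ => fun _ => 1
    | .inr l => Q l
  let f : Mechanisms c k (Sum.elim (fun _ => 1) k)
    | .inl v => fun g _ => F v g
    | .inr _ => fun _ ε => ε
  refine ⟨(IsDist.pi hQ).distMap, k, _, PE, f, ?_, ?_, fun xv => sum_congr rfl fun xl _ => ?_⟩
  · rintro (v | l)
    · exact ⟨fun _ => zero_le_one, show ∑ _ : Fin 1, (1 : ℝ) = 1 by simp⟩
    · exact hQ l
  · rintro (v | l) g g' ε h
    · exact hF v g g' h
    · rfl
  let ε₀ : (a : V ⊕ L) → Fin (Sum.elim (fun _ => 1) k a)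
    | .inl _ => (0 : Fin 1)
    | .inr l => xl l
  rw [Fintype.sum_eq_single ε₀]
  · rw [Fintype.prod_sum_type]
    simp only [PE, mul_one]
    rw [prod_boole, ite_mul, one_mul, zero_mul]
    simp only [mem_univ, forall_const]
    refine if_congr (hsol xl xv).symm ?_ rfl
    simp [f, ε₀, jointVal]
  · intro ε hε
    obtain ⟨a, ha⟩ := Function.ne_iff.1 hε
    rcases a with v | l
    · exact absurd (Subsingleton.elim (α := Fin 1) _ _) ha
    · have ha : xl l ≠ ε (.inr l) := Ne.symm ha
      exact prod_eq_zero (mem_univ (.inr l)) (by simp [f, jointVal, ha])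

end pDAG

namespace mDAG

variable {V : Type} {G : mDAG V}

@[simp] lemma canon_edge_inr_inl {A : G.Facets} {v : V} : G.canon.edge (.inr A) (.inl v) ↔ v ∈ A.1 :=
  Iff.rfl

@[simp] lemma not_canon_edge_inr {a : V ⊕ G.Facets} {A : G.Facets} : ¬ G.canon.edge a (.inr A) := by
  rcases a with _ | _ <;> exact id

lemma not_obsDominates_of_realizableSupport [Fintype V] [DecidableEq V] {G' : mDAG V}
    {c : V → ℕ} {S : Set ((v : V) → Fin (c v))} (h' : G'.RealizableSupport c S)
    (h : ¬ G.RealizableSupport c S) : ¬ G.ObsDominates G' := by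
  obtain ⟨P, hP, hS⟩ := h'
  exact fun hdom => h ⟨P, hdom c P hP, hS⟩

/-- `z` is an instrument for the effect of `x` on `y`; `x` may share latent causes with both. -/
structure IsInstrumental (G : mDAG V) (z x y : V) : Prop where
  eq_or_eq_or_eq : ∀ v, v = z ∨ v = x ∨ v = y
  ne_zx : z ≠ x
  ne_xy : x ≠ y
  not_edge_z : ∀ u, ¬ G.edge u z
  edge_x : ∀ u, G.edge u x → u = z
  edge_y : ∀ u, G.edge u y → u = x
  face_z_y : ∀ A ∈ G.faces, z ∈ A → y ∉ A

theorem Realizable.exists_pos_of_switch_instrument [Fintype V] [DecidableEq V] {c : V → ℕ}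
    {P : ((v : V) → Fin (c v)) → ℝ} (hP : G.Realizable c P) {z x y : V}
    (hG : G.IsInstrumental z x y) {w₀ w₁ : (v : V) → Fin (c v)}
    (h₀ : 0 < P w₀) (h₁ : 0 < P w₁) :
    ∃ w, 0 < P w ∧ w z = w₁ z ∧ (w x = w₀ x → w y = w₀ y) := by
  obtain ⟨k, e, f, hloc, hsupp⟩ := pDAG.Realizable.exists_isLocal_pos_iff_solves hP
  obtain ⟨xl₀, ε₀, hs₀⟩ := (hsupp w₀).1 h₀
  obtain ⟨xl₁, ε₁, hs₁⟩ := (hsupp w₁).1 h₁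
  obtain ⟨hV, hzx, hxy, hz, hx, hy, hzy⟩ := hG
  have hz_ne_y : z ≠ y := fun h => hzy {z} (G.singleton_mem z) (mem_singleton_self z) (by simp [h])
  -- the hidden state realizing `w₀`, with only `z`'s own error and latent causes taken from `w₁`
  let xl : (A : G.Facets) → Fin (k A) := fun A => if z ∈ A.1 then xl₁ A else xl₀ A
  let ε : (a : V ⊕ G.Facets) → Fin (e a) := fun a =>
    if Sum.elim (· = z) (fun A => z ∈ A.1) a then ε₁ a else ε₀ a
  let α : Fin (c x) := f (.inl x) (jointVal c k w₁ xl) (ε₀ (.inl x))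
  let γ : Fin (c y) := f (.inl y) (jointVal c k (Function.update w₁ x α) xl) (ε₀ (.inl y))
  let w := Function.update (Function.update w₁ x α) y γ
  have hwz : w z = w₁ z := by simp [w, hzx, hz_ne_y]
  have hwx : w x = α := by simp [w, hxy]
  have hsolves : pDAG.Solves f w xl ε := by
    rintro (v | A)
    · rcases hV v with hv | hv | hv <;> subst v
      · show w z = f (.inl z) (jointVal c k w xl) (ε (.inl z))
        rw [hwz, show ε (.inl z) = ε₁ (.inl z) from if_pos rfl,
          hloc _ _ (jointVal c k w₁ xl₁) _ ?_]
        · exact hs₁ (.inl z)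
        rintro (u | A) h
        · exact absurd h (hz u)
        · exact if_pos (canon_edge_inr_inl.1 h)
      · show w x = f (.inl x) (jointVal c k w xl) (ε (.inl x))
        rw [hwx, show ε (.inl x) = ε₀ (.inl x) from if_neg (Ne.symm hzx)]
        refine hloc _ _ _ _ fun b h => ?_
        rcases b with u | A
        · obtain rfl := hx u h
          exact hwz.symm
        · rfl
      · show w y = f (.inl y) (jointVal c k w xl) (ε (.inl y))
        rw [show ε (.inl y) = ε₀ (.inl y) from if_neg (Ne.symm hz_ne_y)]
        refine (Function.update_self _ _ _).trans (hloc _ _ _ _ fun b h => ?_)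
        rcases b with u | A
        · obtain rfl := hy u h
          exact (Function.update_self _ _ _).trans hwx.symm
        · rfl
    · show xl A = f (.inr A) (jointVal c k w xl) (ε (.inr A))
      by_cases hA : z ∈ A.1
      · rw [show xl A = xl₁ A from if_pos hA, show ε (.inr A) = ε₁ (.inr A) from if_pos hA,
          hloc _ _ (jointVal c k w₁ xl₁) _ fun b h => absurd h not_canon_edge_inr]
        exact hs₁ (.inr A)
      · rw [show xl A = xl₀ A from if_neg hA, show ε (.inr A) = ε₀ (.inr A) from if_neg hA,
          hloc _ _ (jointVal c k w₀ xl₀) _ fun b h => absurd h not_canon_edge_inr]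
        exact hs₀ (.inr A)
  refine ⟨w, (hsupp w).2 ⟨xl, ε, hsolves⟩, hwz, fun hα => ?_⟩
  refine (Function.update_self _ _ _).trans ((hloc _ _ (jointVal c k w₀ xl₀) _ ?_).trans
    (hs₀ (.inl y)).symm)
  rintro (u | A) h
  · obtain rfl := hy u h
    exact (Function.update_self _ _ _).trans (hwx.symm.trans hα)
  · exact if_neg fun hA => hzy A.1 A.2.1 hA (canon_edge_inr_inl.1 h)

theorem IsInstrumental.not_realizableSupport [Fintype V] [DecidableEq V] {z x y : V}
    (hG : G.IsInstrumental z x y) {c : V → ℕ} {S : Set ((v : V) → Fin (c v))}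
    {w₀ w₁ : (v : V) → Fin (c v)} (hw₀ : w₀ ∈ S) (hw₁ : w₁ ∈ S)
    (hS : ∀ w ∈ S, w z = w₁ z → w x = w₀ x ∧ w y ≠ w₀ y) : ¬ G.RealizableSupport c S := by
  rintro ⟨P, hP, hsupp⟩
  obtain ⟨w, hw, hwz, hwy⟩ :=
    hP.exists_pos_of_switch_instrument hG ((hsupp w₀).1 hw₀) ((hsupp w₁).1 hw₁)
  obtain ⟨hwx, hne⟩ := hS w ((hsupp w).2 hw) hwz
  exact hne (hwy hwx)

end mDAG

def evansFacetAB : evansMDAG.Facets := ⟨{0, 1}, by decide, by decide⟩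

def evansFacetAC : evansMDAG.Facets := ⟨{0, 2}, by decide, by decide⟩

lemma evansFacetAC_ne_AB : evansFacetAC ≠ evansFacetAB := fun h =>
  absurd (congrArg Subtype.val h) (by decide)

def evansMechanism (v : Fin 3)
    (g : (b : Fin 3 ⊕ evansMDAG.Facets) → Fin (Sum.elim (fun _ => 2) (fun _ => 2) b)) : Fin 2 :=
  let uab : Fin 2 := g (.inr evansFacetAB)
  let uac : Fin 2 := g (.inr evansFacetAC)
  let a : Fin 2 := g (.inl 0)
  ![if uab = uac then 0 else 1, if a = 0 then uab else 0, if a = 0 then uac else 0] v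

def evansSolution (p q : Fin 2) : Fin 3 → Fin 2 :=
  if p = q then ![0, p, p] else ![1, 0, 0]

lemma evansMechanism_isLocal (v : Fin 3)
    (g g' : (b : Fin 3 ⊕ evansMDAG.Facets) → Fin (Sum.elim (fun _ => 2) (fun _ => 2) b))
    (h : ∀ b, evansMDAG.canon.edge b (.inl v) → g b = g' b) :
    evansMechanism v g = evansMechanism v g' := by
  fin_cases v
  · simp only [evansMechanism]
    rw [h (.inr evansFacetAB) (mDAG.canon_edge_inr_inl.2 (by decide)), h (.inr evansFacetAC) (mDAG.canon_edge_inr_inl.2 (by decide))]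
    rfl
  · simp only [evansMechanism]
    rw [h (.inr evansFacetAB) (mDAG.canon_edge_inr_inl.2 (by decide)), h (.inl 0) (Or.inl ⟨rfl, rfl⟩)]
    rfl
  · simp only [evansMechanism]
    rw [h (.inr evansFacetAC) (mDAG.canon_edge_inr_inl.2 (by decide)), h (.inl 0) (Or.inr ⟨rfl, rfl⟩)]
    rfl

lemma evansMechanism_solves_iff (xl : evansMDAG.Facets → Fin 2) (xv : Fin 3 → Fin 2) :
    (∀ v, xv v = evansMechanism v (jointVal (fun _ => 2) (fun _ => 2) xv xl)) ↔
      evansSolution (xl evansFacetAB) (xl evansFacetAC) = xv := by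
  have key : ∀ p q a b c : Fin 2, (a = (if p = q then 0 else 1) ∧ b = (if a = 0 then p else 0) ∧
      c = (if a = 0 then q else 0)) ↔ evansSolution p q = ![a, b, c] := by
    decide
  obtain ⟨a, b, c, rfl⟩ : ∃ a b c, xv = ![a, b, c] :=
    ⟨xv 0, xv 1, xv 2, by funext i; fin_cases i <;> rfl⟩
  rw [← key]
  simp only [Fin.forall_fin_succ, evansMechanism, jointVal, Matrix.cons_val_zero,
    Matrix.cons_val_succ, Matrix.cons_val_fin_one, forall_const]
  rfl

lemma mem_evansSupport_iff (xv : Fin 3 → Fin 2) :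
    xv ∈ evansSupport ↔ ∃ p q, evansSolution p q = xv := by
  constructor
  · rintro (rfl | rfl | rfl)
    exacts [⟨0, 0, by decide⟩, ⟨1, 1, by decide⟩, ⟨0, 1, by decide⟩]
  · rintro ⟨p, q, rfl⟩
    fin_cases p <;> fin_cases q <;> simp [evansSolution, evansSupport]

theorem evans_realizableSupport : evansMDAG.RealizableSupport (fun _ => 2) evansSupport := by
  have huniform : IsDist fun _ : Fin 2 => (1 / 2 : ℝ) := ⟨fun _ => by norm_num, by norm_num⟩
  refine ⟨_, evansMDAG.canon.realizable_distMap (fun _ => huniform) evansMechanism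
    evansMechanism_isLocal _ evansMechanism_solves_iff, fun xv => ?_⟩
  rw [distMap_pos_iff (fun _ => by positivity), mem_evansSupport_iff]
  constructor
  · rintro ⟨p, q, rfl⟩
    exact ⟨fun A => if A = evansFacetAB then p else q, by positivity, by simp [evansFacetAC_ne_AB]⟩
  · rintro ⟨xl, -, rfl⟩
    exact ⟨_, _, rfl⟩

lemma instBAC_isInstrumental : instBAC.IsInstrumental 1 0 2 where
  eq_or_eq_or_eq := by decide
  ne_zx := by decide
  ne_xy := by decide
  not_edge_z u := by simp [instBAC]
  edge_x u := by simp [instBAC]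
  edge_y u := by simp [instBAC]
  face_z_y := by decide

lemma instCAB_isInstrumental : instCAB.IsInstrumental 2 0 1 where
  eq_or_eq_or_eq := by decide
  ne_zx := by decide
  ne_xy := by decide
  not_edge_z u := by simp [instCAB]
  edge_x u := by simp [instCAB]
  edge_y u := by simp [instCAB]
  face_z_y := by decide

theorem instBAC_not_realizableSupport : ¬ instBAC.RealizableSupport (fun _ => 2) evansSupport :=
  instBAC_isInstrumental.not_realizableSupport (w₀ := ![0, 0, 0]) (w₁ := ![0, 1, 1])
    (by simp [evansSupport]) (by simp [evansSupport]) (by rintro w (rfl | rfl | rfl) <;> decide)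

theorem instCAB_not_realizableSupport : ¬ instCAB.RealizableSupport (fun _ => 2) evansSupport :=
  instCAB_isInstrumental.not_realizableSupport (w₀ := ![0, 0, 0]) (w₁ := ![0, 1, 1])
    (by simp [evansSupport]) (by simp [evansSupport]) (by rintro w (rfl | rfl | rfl) <;> decide)

/-- With all three visible variables binary and
`S = {(0,0,0), (0,1,1), (1,0,0)}`:
(i) some distribution realizable by the Evans mDAG at binary cardinalities has support
exactly `S`; and (ii) no distribution with support `S` is realizable by Instrumental
BAC, and none is realizable by Instrumental CAB.  Consequently, neither Instrumental
BAC nor Instrumental CAB observationally dominates the Evans mDAG. -/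
theorem evans_not_dominated_by_instrumentals :
    ((∃ P : ((v : Fin 3) → Fin 2) → ℝ,
        evansMDAG.Realizable (fun _ => 2) P ∧ ∀ x, x ∈ evansSupport ↔ 0 < P x) ∧
      (∀ P : ((v : Fin 3) → Fin 2) → ℝ, (∀ x, x ∈ evansSupport ↔ 0 < P x) →
        ¬ instBAC.Realizable (fun _ => 2) P) ∧
      (∀ P : ((v : Fin 3) → Fin 2) → ℝ, (∀ x, x ∈ evansSupport ↔ 0 < P x) →
        ¬ instCAB.Realizable (fun _ => 2) P)) ∧
    ¬ instBAC.ObsDominates evansMDAG ∧ ¬ instCAB.ObsDominates evansMDAG := by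
  have hBAC := instBAC_not_realizableSupport
  have hCAB := instCAB_not_realizableSupport
  exact ⟨⟨evans_realizableSupport, fun P hS hP => hBAC ⟨P, hP, hS⟩,
      fun P hS hP => hCAB ⟨P, hP, hS⟩⟩,
    mDAG.not_obsDominates_of_realizableSupport evans_realizableSupport hBAC,
    mDAG.not_obsDominates_of_realizableSupport evans_realizableSupport hCAB⟩
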